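/- arXiv:quant-ph/0603199 — 9 statements merged into one kernel-verified Lean document; each statement's English description precedes it below -/
import Mathlib

section
/- Every separable state σ ∈ S_{M,N} can be written as a convex combination of M²N² pure product states: there exist real numbers p_i ≥ 0 with Σ_{i=1}^{M²N²} p_i = 1, unit vectors a_i ∈ ℂ^M and b_i ∈ ℂ^N, such that σ = Σ_{i=1}^{M²N²} p_i (a_i a_iᴴ) ⊗ (b_i b_iᴴ). -/
/-!
The difference of two pure product states is a traceless Hermitian matrix, and the traceless
Hermitian matrices on `ℂ^M ⊗ ℂ^N` form a real vector space of dimension `M²N² - 1`. Hence the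
pure product states span an affine space of dimension at most `M²N² - 1`, and Carathéodory's
theorem writes every point of their convex hull as a convex combination of at most `M²N²`
of them; unused slots get weight zero.
-/

open scoped Matrix Kronecker BigOperators

/-- The rank-one matrix `a aᴴ` with `(j,k)` entry `a j * conj (a k)`. -/
noncomputable def outer {M : ℕ} (a : Fin M → ℂ) : Matrix (Fin M) (Fin M) ℂ :=
  Matrix.vecMulVec a (fun k => (starRingEnd ℂ) (a k))

/-- The pure product density matrix `(a aᴴ) ⊗ (b bᴴ)`. -/
noncomputable def prodState {M N : ℕ} (a : Fin M → ℂ) (b : Fin N → ℂ) :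
    Matrix (Fin M × Fin N) (Fin M × Fin N) ℂ :=
  outer a ⊗ₖ outer b

/-- `a` is a unit vector (squared Euclidean norm equal to 1). -/
def unitVec {M : ℕ} (a : Fin M → ℂ) : Prop := ∑ j, Complex.normSq (a j) = 1

/-- The set of separable states: the real convex hull of pure product density matrices. -/
noncomputable def SepSet (M N : ℕ) : Set (Matrix (Fin M × Fin N) (Fin M × Fin N) ℂ) :=
  convexHull ℝ { X | ∃ a b, unitVec a ∧ unitVec b ∧ X = prodState a b }

open Module

theorem exists_fin_combination_of_card_le {𝕜 E ι : Type*} [Semiring 𝕜] [PartialOrder 𝕜]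
    [AddCommMonoid E] [Module 𝕜 E] [Fintype ι] [Nonempty ι] {m : ℕ}
    (hm : Fintype.card ι ≤ m) (w : ι → 𝕜) (z : ι → E) (hw : ∀ i, 0 ≤ w i) :
    ∃ (w' : Fin m → 𝕜) (z' : Fin m → E), (∀ j, 0 ≤ w' j) ∧ ∑ j, w' j = ∑ i, w i ∧
      Set.range z' ⊆ Set.range z ∧ ∑ j, w' j • z' j = ∑ i, w i • z i := by
  obtain ⟨e⟩ := Function.Embedding.nonempty_of_card_le (hm.trans_eq (Fintype.card_fin m).symm)
  obtain ⟨i₀⟩ := ‹Nonempty ι›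
  set w' : Fin m → 𝕜 := Function.extend e w 0
  set z' : Fin m → E := Function.extend e z fun _ => z i₀
  have hw'e (i : ι) : w' (e i) = w i := e.injective.extend_apply _ _ i
  have hz'e (i : ι) : z' (e i) = z i := e.injective.extend_apply _ _ i
  have hw'_out (j : Fin m) (hj : j ∉ Set.range e) : w' j = 0 := Function.extend_apply' _ _ j hj
  have hz'_out (j : Fin m) (hj : j ∉ Set.range e) : z' j = z i₀ := Function.extend_apply' _ _ j hj
  refine ⟨w', z', fun j => ?_,
    (Fintype.sum_of_injective e e.injective w w' hw'_out fun i => (hw'e i).symm).symm,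
    ?_, (Fintype.sum_of_injective e e.injective _ _ (fun j hj => by rw [hw'_out j hj, zero_smul])
      fun i => by rw [hw'e, hz'e]).symm⟩
  · by_cases hj : j ∈ Set.range e
    · obtain ⟨i, rfl⟩ := hj
      exact hw'e i ▸ hw i
    · exact (hw'_out j hj).symm ▸ le_rfl
  · rintro _ ⟨j, rfl⟩
    by_cases hj : j ∈ Set.range e
    · obtain ⟨i, rfl⟩ := hj
      exact ⟨i, (hz'e i).symm⟩
    · exact ⟨i₀, (hz'_out j hj).symm⟩

theorem exists_fin_convex_combination_of_mem_convexHull {𝕜 E : Type*} [Field 𝕜] [LinearOrder 𝕜]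
    [IsStrictOrderedRing 𝕜] [AddCommGroup E] [Module 𝕜 E] [FiniteDimensional 𝕜 E] {s : Set E}
    {m : ℕ} (hm : finrank 𝕜 (vectorSpan 𝕜 s) + 1 ≤ m) {x : E} (hx : x ∈ convexHull 𝕜 s) :
    ∃ (w : Fin m → 𝕜) (z : Fin m → E),
      (∀ i, 0 ≤ w i) ∧ ∑ i, w i = 1 ∧ (∀ i, z i ∈ s) ∧ ∑ i, w i • z i = x := by
  obtain ⟨ι, _, z, w, hzs, hz, hw, hw₁, rfl⟩ := eq_pos_convex_span_of_mem_convexHull hx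
  have : Nonempty ι := by
    by_contra h
    simp [not_nonempty_iff.mp h] at hw₁
  have hcard : Fintype.card ι ≤ m := by
    rw [← hz.finrank_vectorSpan_add_one]
    exact (Nat.add_le_add_right (Submodule.finrank_mono (vectorSpan_mono 𝕜 hzs)) 1).trans hm
  obtain ⟨w', z', hw', hw'₁, hz', hw'z'⟩ :=
    exists_fin_combination_of_card_le hcard w z fun i => (hw i).le
  exact ⟨w', z', hw', hw'₁.trans hw₁, fun j => hzs (hz' ⟨j, rfl⟩), hw'z'⟩

namespace Matrix

variable (n : Type*) [Fintype n]

noncomputable def hermitianTraceless : Submodule ℝ (Matrix n n ℂ) :=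
  selfAdjoint.submodule ℝ (Matrix n n ℂ) ⊓
    LinearMap.ker ((traceLinearMap n ℂ ℂ).restrictScalars ℝ)

theorem finrank_selfAdjoint_le :
    finrank ℝ (selfAdjoint.submodule ℝ (Matrix n n ℂ)) ≤ Fintype.card n ^ 2 := by
  -- a Hermitian matrix is recovered from `re + im` of its entries, `re` being symmetric
  -- and `im` antisymmetric
  let f : Matrix n n ℂ →ₗ[ℝ] n × n → ℝ :=
    { toFun := fun X p => (X p.1 p.2).re + (X p.1 p.2).im
      map_add' := fun X Y => by
        funext p
        simp only [add_apply, Complex.add_re, Complex.add_im, Pi.add_apply]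
        ring
      map_smul' := fun r X => by
        funext p
        simp [mul_add] }
  have hf : Function.Injective (f ∘ₗ (selfAdjoint.submodule ℝ (Matrix n n ℂ)).subtype) := by
    rw [← LinearMap.ker_eq_bot, LinearMap.ker_eq_bot']
    rintro ⟨X, hX⟩ hfX
    ext i j : 3
    have hji : X j i = starRingEnd ℂ (X i j) := (IsHermitian.apply hX j i).symm
    have h₁ := congrFun hfX (i, j)
    have h₂ := congrFun hfX (j, i)
    simp only [LinearMap.comp_apply, Submodule.subtype_apply, hji, Complex.conj_re,
      Complex.conj_im, Pi.zero_apply, f, LinearMap.coe_mk, AddHom.coe_mk] at h₁ h₂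
    apply Complex.ext <;> simp <;> linarith
  simpa [sq] using LinearMap.finrank_le_finrank_of_injective hf

theorem finrank_hermitianTraceless_lt [Nonempty n] :
    finrank ℝ (hermitianTraceless n) < Fintype.card n ^ 2 := by
  refine lt_of_lt_of_le (Submodule.finrank_lt_finrank_of_lt ?_) (finrank_selfAdjoint_le n)
  refine lt_of_le_of_ne inf_le_left fun h => ?_
  classical
  have h₁ : (1 : Matrix n n ℂ) ∈ hermitianTraceless n := h ▸ IsSelfAdjoint.one _
  have h₂ : trace (1 : Matrix n n ℂ) = 0 := h₁.2
  simp at h₂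

end Matrix

open scoped ComplexOrder in
theorem isHermitian_outer {M : ℕ} (a : Fin M → ℂ) : (outer a).IsHermitian :=
  (Matrix.posSemidef_vecMulVec_self_star a).isHermitian

theorem trace_outer {M : ℕ} {a : Fin M → ℂ} (ha : unitVec a) : (outer a).trace = 1 := by
  rw [outer, Matrix.trace_vecMulVec, dotProduct]
  simp_rw [Complex.mul_conj]
  exact_mod_cast ha

theorem isHermitian_prodState {M N : ℕ} (a : Fin M → ℂ) (b : Fin N → ℂ) :
    (prodState a b).IsHermitian := by
  rw [prodState, Matrix.IsHermitian, Matrix.conjTranspose_kronecker, isHermitian_outer a,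
    isHermitian_outer b]

theorem trace_prodState {M N : ℕ} {a : Fin M → ℂ} {b : Fin N → ℂ} (ha : unitVec a)
    (hb : unitVec b) : (prodState a b).trace = 1 := by
  rw [prodState, Matrix.trace_kronecker, trace_outer ha, trace_outer hb, mul_one]

theorem vectorSpan_prodStates_le (M N : ℕ) :
    vectorSpan ℝ {X | ∃ a b, unitVec a ∧ unitVec b ∧ X = prodState a b} ≤
      Matrix.hermitianTraceless (Fin M × Fin N) := by
  rw [vectorSpan_def, Submodule.span_le]
  rintro _ ⟨_, ⟨a, b, ha, hb, rfl⟩, _, ⟨c, d, hc, hd, rfl⟩, rfl⟩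
  refine ⟨(isHermitian_prodState a b).sub (isHermitian_prodState c d), ?_⟩
  simp [vsub_eq_sub, trace_prodState ha hb, trace_prodState hc hd]

theorem separable_is_convex_combination_of_MsqNsq_pure_products
    (M N : ℕ) (hM : 1 ≤ M) (hN : 1 ≤ N)
    (σ : Matrix (Fin M × Fin N) (Fin M × Fin N) ℂ) (hσ : σ ∈ SepSet M N) :
    ∃ (p : Fin (M ^ 2 * N ^ 2) → ℝ) (a : Fin (M ^ 2 * N ^ 2) → Fin M → ℂ)
      (b : Fin (M ^ 2 * N ^ 2) → Fin N → ℂ),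
      (∀ i, 0 ≤ p i) ∧ (∑ i, p i = 1) ∧ (∀ i, unitVec (a i)) ∧ (∀ i, unitVec (b i)) ∧
      σ = ∑ i, p i • prodState (a i) (b i) := by
  have : Nonempty (Fin M × Fin N) := ⟨(⟨0, hM⟩, ⟨0, hN⟩)⟩
  have hdim := (Submodule.finrank_mono (vectorSpan_prodStates_le M N)).trans_lt
    (Matrix.finrank_hermitianTraceless_lt (Fin M × Fin N))
  rw [Fintype.card_prod, Fintype.card_fin, Fintype.card_fin, mul_pow] at hdim
  obtain ⟨p, z, hp, hp₁, hz, rfl⟩ := exists_fin_convex_combination_of_mem_convexHull hdim hσ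
  choose a b ha hb hab using hz
  exact ⟨p, a, b, hp, hp₁, ha, hb, Finset.sum_congr rfl fun i _ => by rw [hab i]⟩
end

section
/- Let O be a Hermitian n×n complex matrix (n ≥ 1) and let α ∈ ℝ satisfy 0 < α ≤ 1. If tr(O²) = α² and tr(O³) = α³, then tr(O) = α and O has rank 1 (i.e., O corresponds to an unnormalized pure state). -/
/-!
Diagonalize `O`: its eigenvalues `λᵢ` are real with `∑ λᵢ² = α²` and `∑ λᵢ³ = α³`. The first
identity forces `λᵢ ≤ α`, so every term of `∑ λᵢ² (α - λᵢ) = α³ - α³ = 0` is nonnegative, hence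
zero, and each `λᵢ` is `0` or `α`. Then `∑ λᵢ² = α²` says that exactly one eigenvalue equals `α`.
-/

open Matrix Finset

section PowerSums

variable {ι : Type*} [Fintype ι] {x : ι → ℝ} {a : ℝ}

lemma le_of_sum_sq_eq_sq (ha : 0 ≤ a) (h2 : ∑ i, x i ^ 2 = a ^ 2) (i : ι) : x i ≤ a := by
  have hi : x i ^ 2 ≤ a ^ 2 :=
    h2 ▸ single_le_sum (f := fun i ↦ x i ^ 2) (fun j _ ↦ sq_nonneg (x j)) (mem_univ i)
  exact abs_le_of_sq_le_sq' hi ha |>.2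

lemma eq_zero_or_eq_of_sum_sq_of_sum_cube (ha : 0 ≤ a) (h2 : ∑ i, x i ^ 2 = a ^ 2)
    (h3 : ∑ i, x i ^ 3 = a ^ 3) (i : ι) : x i = 0 ∨ x i = a := by
  have hnonneg : ∀ j ∈ univ, 0 ≤ x j ^ 2 * (a - x j) := fun j _ ↦
    mul_nonneg (sq_nonneg _) (sub_nonneg.2 (le_of_sum_sq_eq_sq ha h2 j))
  have hsum : ∑ j, x j ^ 2 * (a - x j) = 0 := by
    simp only [mul_sub, ← sum_mul, sum_sub_distrib, h2, ← pow_succ, h3, sub_self]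
  have hi := (sum_eq_zero_iff_of_nonneg hnonneg).1 hsum i (mem_univ i)
  rcases mul_eq_zero.1 hi with h | h
  · exact .inl (pow_eq_zero_iff two_ne_zero |>.1 h)
  · exact .inr (sub_eq_zero.1 h).symm

lemma sum_eq_of_sum_sq_of_sum_cube (ha : 0 < a) (h2 : ∑ i, x i ^ 2 = a ^ 2)
    (h3 : ∑ i, x i ^ 3 = a ^ 3) : ∑ i, x i = a := by
  have hsq : ∀ i, x i ^ 2 = a * x i := fun i ↦ by
    rcases eq_zero_or_eq_of_sum_sq_of_sum_cube ha.le h2 h3 i with h | h <;> rw [h] <;> ring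
  have : a * ∑ i, x i = a * a := by rw [mul_sum, ← sum_congr rfl fun i _ ↦ hsq i, h2, sq]
  exact mul_left_cancel₀ ha.ne' this

lemma card_ne_zero_eq_one_of_sum_sq_of_sum_cube (ha : 0 < a) (h2 : ∑ i, x i ^ 2 = a ^ 2)
    (h3 : ∑ i, x i ^ 3 = a ^ 3) : Fintype.card {i // x i ≠ 0} = 1 := by
  classical
  have hsq : ∀ i, x i ^ 2 = if x i ≠ 0 then a ^ 2 else 0 := fun i ↦ by
    rcases eq_zero_or_eq_of_sum_sq_of_sum_cube ha.le h2 h3 i with h | h <;> simp [h, ha.ne']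
  have hcount : ∑ i, x i ^ 2 = Fintype.card {i // x i ≠ 0} * a ^ 2 := by
    rw [sum_congr rfl fun i _ ↦ hsq i, sum_ite, sum_const_zero, add_zero, sum_const,
      nsmul_eq_mul, Fintype.card_subtype]
  rw [h2, eq_comm, mul_eq_right₀ (pow_ne_zero 2 ha.ne')] at hcount
  exact_mod_cast hcount

end PowerSums

lemma Matrix.IsHermitian.trace_pow_eq_sum_eigenvalues_pow {𝕜 n : Type*} [RCLike 𝕜] [Fintype n]
    [DecidableEq n] {A : Matrix n n 𝕜} (hA : A.IsHermitian) (k : ℕ) :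
    (A ^ k).trace = ∑ i, (hA.eigenvalues i : 𝕜) ^ k := by
  conv_lhs => rw [hA.spectral_theorem]
  rw [← map_pow, Unitary.conjStarAlgAut_apply, trace_mul_cycle,
    Unitary.coe_star_mul_self, one_mul, diagonal_pow, trace_diagonal]
  rfl

theorem trace_eq_and_rank_one_of_trace_sq_cube_general
    (n : ℕ) (O : Matrix (Fin n) (Fin n) ℂ) (hO : O.IsHermitian)
    (α : ℝ) (hα0 : 0 < α)
    (h2 : Matrix.trace (O ^ 2) = (α : ℂ) ^ 2)
    (h3 : Matrix.trace (O ^ 3) = (α : ℂ) ^ 3) :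
    Matrix.trace O = (α : ℂ) ∧ O.rank = 1 := by
  rw [hO.trace_pow_eq_sum_eigenvalues_pow] at h2 h3
  have h2' : ∑ i, hO.eigenvalues i ^ 2 = α ^ 2 := Complex.ofReal_injective (by simpa using h2)
  have h3' : ∑ i, hO.eigenvalues i ^ 3 = α ^ 3 := Complex.ofReal_injective (by simpa using h3)
  refine ⟨?_, ?_⟩
  · rw [hO.trace_eq_sum_eigenvalues, ← sum_eq_of_sum_sq_of_sum_cube hα0 h2' h3']
    push_cast
    rfl
  · rw [hO.rank_eq_card_non_zero_eigs]
    exact card_ne_zero_eq_one_of_sum_sq_of_sum_cube hα0 h2' h3'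

theorem trace_eq_and_rank_one_of_trace_sq_cube
    (n : ℕ) (hn : 1 ≤ n) (O : Matrix (Fin n) (Fin n) ℂ) (hO : O.IsHermitian)
    (α : ℝ) (hα0 : 0 < α) (hα1 : α ≤ 1)
    (h2 : Matrix.trace (O ^ 2) = (α : ℂ) ^ 2)
    (h3 : Matrix.trace (O ^ 3) = (α : ℂ) ^ 3) :
    Matrix.trace O = (α : ℂ) ∧ O.rank = 1 :=
  trace_eq_and_rank_one_of_trace_sq_cube_general n O hO α hα0 h2 h3
end

section
/- Let M, N ≥ 1, set k = M²N², and let p ≥ 1 be an integer. For i = 1,…,k let p_i ∈ [0,1] with Σ_i p_i = 1, and let α_i ∈ ℂ^M, β_i ∈ ℂ^N be unit vectors; set σ = Σ_i p_i (α_i α_iᴴ) ⊗ (β_i β_iᴴ). Suppose p̃_i ∈ [0,1] and vectors α̃_i ∈ ℂ^M, β̃_i ∈ ℂ^N satisfy: |p_i − p̃_i| ≤ 2^{−p}; and, componentwise, the real part and the imaginary part of each entry of α̃_i (respectively β̃_i) differ from the corresponding real/imaginary part of the entry of α_i (respectively β_i) by at most 2^{−p} in absolute value, and each such real/imaginary part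 of α̃_i and β̃_i has absolute value at most 1. Then ‖σ − σ̃‖₂ < M³N³ · 2^{−(p−7.5)}, where σ̃ = Σ_i p̃_i (α̃_i α̃_iᴴ) ⊗ (β̃_i β̃_iᴴ). -/
open scoped Matrix Kronecker BigOperators

/-- The Frobenius (Hilbert–Schmidt) norm `√(tr(Xᴴ X))`. -/
noncomputable def frobNorm {n : Type*} [Fintype n] (X : Matrix n n ℂ) : ℝ :=
  Real.sqrt ((Matrix.trace (Xᴴ * X)).re)

/-!
Every entry of `σ - σ̃` is a sum of `k = M²N²` differences
`q a_j conj(a_k) b_l conj(b_m) - q̃ ã_j conj(ã_k) b̃_l conj(b̃_m)`. Peeling off one factor at a time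
with `‖xy - x'y'‖ ≤ ‖x - x'‖‖y‖ + ‖x'‖‖y - y'‖`, using `‖a_j‖ ≤ 1` (unit vectors), `‖ã_j‖ ≤ 2` and
`‖a_j - ã_j‖ ≤ 2ε` (from the real/imaginary bounds), each difference is at most `31ε`, where
`ε = 2^{-p}`. The Frobenius norm of an `n × n` matrix is at most `n` times its largest entry, so
`‖σ - σ̃‖₂ ≤ MN · M²N² · 31ε`, and `31 < 2^{7.5}`.
-/

theorem norm_mul_sub_mul_le {R : Type*} [SeminormedRing R] {x x' y y' : R} {δ δ' b b' : ℝ}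
    (hx : ‖x - x'‖ ≤ δ) (hy : ‖y‖ ≤ b) (hx' : ‖x'‖ ≤ b') (hy' : ‖y - y'‖ ≤ δ') :
    ‖x * y - x' * y'‖ ≤ δ * b + b' * δ' := by
  have hδ : 0 ≤ δ := (norm_nonneg _).trans hx
  have hb' : 0 ≤ b' := (norm_nonneg _).trans hx'
  calc ‖x * y - x' * y'‖ = ‖(x - x') * y + x' * (y - y')‖ := by noncomm_ring
    _ ≤ ‖x - x'‖ * ‖y‖ + ‖x'‖ * ‖y - y'‖ :=
      (norm_add_le _ _).trans (add_le_add (norm_mul_le _ _) (norm_mul_le _ _))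
    _ ≤ δ * b + b' * δ' := by gcongr

theorem Complex.norm_le_of_abs_re_le_of_abs_im_le {z : ℂ} {c : ℝ} (hre : |z.re| ≤ c)
    (him : |z.im| ≤ c) : ‖z‖ ≤ 2 * c := by
  linarith [Complex.norm_le_abs_re_add_abs_im z]

theorem unitVec.norm_apply_le_one {M : ℕ} {a : Fin M → ℂ} (ha : unitVec a) (j : Fin M) :
    ‖a j‖ ≤ 1 := by
  have : Complex.normSq (a j) ≤ 1 :=
    ha ▸ Finset.single_le_sum (fun _ _ => Complex.normSq_nonneg _) (Finset.mem_univ j)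
  rw [← Complex.sq_norm] at this
  exact (sq_le_one_iff₀ (norm_nonneg _)).mp this

def IsReImApprox {M : ℕ} (ε : ℝ) (a a' : Fin M → ℂ) : Prop :=
  ∀ j, |(a' j).re - (a j).re| ≤ ε ∧ |(a' j).im - (a j).im| ≤ ε ∧ |(a' j).re| ≤ 1 ∧ |(a' j).im| ≤ 1

namespace IsReImApprox

variable {M : ℕ} {ε : ℝ} {a a' : Fin M → ℂ}

theorem norm_le_two (h : IsReImApprox ε a a') (j : Fin M) : ‖a' j‖ ≤ 2 := by
  simpa using Complex.norm_le_of_abs_re_le_of_abs_im_le (h j).2.2.1 (h j).2.2.2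

theorem norm_sub_le (h : IsReImApprox ε a a') (j : Fin M) : ‖a j - a' j‖ ≤ 2 * ε := by
  rw [norm_sub_rev]
  exact Complex.norm_le_of_abs_re_le_of_abs_im_le
    (by rw [Complex.sub_re]; exact (h j).1) (by rw [Complex.sub_im]; exact (h j).2.1)

end IsReImApprox

theorem outer_apply {M : ℕ} (a : Fin M → ℂ) (j k : Fin M) :
    outer a j k = a j * (starRingEnd ℂ) (a k) := rfl

theorem prodState_apply {M N : ℕ} (a : Fin M → ℂ) (b : Fin N → ℂ) (r c : Fin M × Fin N) :
    prodState a b r c = outer a r.1 c.1 * outer b r.2 c.2 := rfl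

theorem norm_outer_apply_le {M : ℕ} {a : Fin M → ℂ} {C : ℝ} (ha : ∀ j, ‖a j‖ ≤ C)
    (j k : Fin M) : ‖outer a j k‖ ≤ C * C := by
  rw [outer_apply, norm_mul, Complex.norm_conj]
  exact mul_le_mul (ha j) (ha k) (norm_nonneg _) ((norm_nonneg _).trans (ha j))

theorem norm_prodState_apply_le {M N : ℕ} {a : Fin M → ℂ} {b : Fin N → ℂ}
    (ha : ∀ j, ‖a j‖ ≤ 1) (hb : ∀ l, ‖b l‖ ≤ 1) (r c : Fin M × Fin N) :
    ‖prodState a b r c‖ ≤ 1 := by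
  rw [prodState_apply, norm_mul]
  have := norm_outer_apply_le ha r.1 c.1
  have := norm_outer_apply_le hb r.2 c.2
  nlinarith [norm_nonneg (outer a r.1 c.1), norm_nonneg (outer b r.2 c.2)]

theorem norm_outer_apply_sub_le {M : ℕ} {a a' : Fin M → ℂ} {δ : ℝ} (ha : ∀ j, ‖a j‖ ≤ 1)
    (ha' : ∀ j, ‖a' j‖ ≤ 2) (hd : ∀ j, ‖a j - a' j‖ ≤ δ) (j k : Fin M) :
    ‖outer a j k - outer a' j k‖ ≤ 3 * δ := by
  have hk : ‖(starRingEnd ℂ) (a k)‖ ≤ 1 := by rw [Complex.norm_conj]; exact ha k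
  have hdk : ‖(starRingEnd ℂ) (a k) - (starRingEnd ℂ) (a' k)‖ ≤ δ := by
    rw [← map_sub, Complex.norm_conj]; exact hd k
  have := norm_mul_sub_mul_le (hd j) hk (ha' j) hdk
  rw [outer_apply, outer_apply]; linarith

theorem norm_prodState_apply_sub_le {M N : ℕ} {a a' : Fin M → ℂ} {b b' : Fin N → ℂ} {δ : ℝ}
    (ha : ∀ j, ‖a j‖ ≤ 1) (ha' : ∀ j, ‖a' j‖ ≤ 2) (had : ∀ j, ‖a j - a' j‖ ≤ δ)
    (hb : ∀ l, ‖b l‖ ≤ 1) (hb' : ∀ l, ‖b' l‖ ≤ 2) (hbd : ∀ l, ‖b l - b' l‖ ≤ δ)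
    (r c : Fin M × Fin N) :
    ‖prodState a b r c - prodState a' b' r c‖ ≤ 15 * δ := by
  have := norm_mul_sub_mul_le (norm_outer_apply_sub_le ha ha' had r.1 c.1)
    (by simpa using norm_outer_apply_le hb r.2 c.2) (norm_outer_apply_le ha' r.1 c.1)
    (norm_outer_apply_sub_le hb hb' hbd r.2 c.2)
  rw [prodState_apply, prodState_apply]; linarith

theorem norm_smul_prodState_apply_sub_le {M N : ℕ} {q q' ε : ℝ} {a a' : Fin M → ℂ}
    {b b' : Fin N → ℂ} (hq : |q - q'| ≤ ε) (hq' : |q'| ≤ 1)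
    (ha : unitVec a) (ha' : IsReImApprox ε a a') (hb : unitVec b) (hb' : IsReImApprox ε b b')
    (r c : Fin M × Fin N) :
    ‖(q • prodState a b) r c - (q' • prodState a' b') r c‖ ≤ 31 * ε := by
  have hqd : ‖(q : ℂ) - q'‖ ≤ ε := by rwa [← Complex.ofReal_sub, Complex.norm_real]
  have hq'1 : ‖(q' : ℂ)‖ ≤ 1 := by rwa [Complex.norm_real]
  have := norm_mul_sub_mul_le hqd (norm_prodState_apply_le ha.norm_apply_le_one
    hb.norm_apply_le_one r c) hq'1 (norm_prodState_apply_sub_le ha.norm_apply_le_one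
    ha'.norm_le_two ha'.norm_sub_le hb.norm_apply_le_one hb'.norm_le_two hb'.norm_sub_le r c)
  simp only [Matrix.smul_apply, Complex.real_smul]; linarith

theorem re_trace_conjTranspose_mul_self {n : Type*} [Fintype n] (X : Matrix n n ℂ) :
    (Matrix.trace (Xᴴ * X)).re = ∑ r, ∑ c, ‖X r c‖ ^ 2 := by
  simp only [Matrix.trace, Matrix.diag, Matrix.mul_apply, Matrix.conjTranspose_apply,
    Complex.re_sum, Complex.sq_norm]
  rw [Finset.sum_comm]
  simp [Complex.normSq_apply]

theorem frobNorm_le_of_forall_norm_apply_le {n : Type*} [Fintype n] {X : Matrix n n ℂ} {K : ℝ}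
    (hK0 : 0 ≤ K) (hK : ∀ r c, ‖X r c‖ ≤ K) : frobNorm X ≤ Fintype.card n * K := by
  rw [frobNorm, Real.sqrt_le_left (by positivity), re_trace_conjTranspose_mul_self]
  calc ∑ r, ∑ c, ‖X r c‖ ^ 2 ≤ ∑ _r : n, ∑ _c : n, K ^ 2 := by
        gcongr with r _ c _; exact hK r c
    _ = _ := by simp; ring

theorem frobNorm_truncation_bound_general
    (M N : ℕ) (hM : 1 ≤ M) (hN : 1 ≤ N) (p : ℕ)
    (q : Fin (M ^ 2 * N ^ 2) → ℝ)
    (α : Fin (M ^ 2 * N ^ 2) → Fin M → ℂ) (β : Fin (M ^ 2 * N ^ 2) → Fin N → ℂ)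
    (hα : ∀ i, unitVec (α i)) (hβ : ∀ i, unitVec (β i))
    (qt : Fin (M ^ 2 * N ^ 2) → ℝ) (hqt : ∀ i, 0 ≤ qt i ∧ qt i ≤ 1)
    (αt : Fin (M ^ 2 * N ^ 2) → Fin M → ℂ) (βt : Fin (M ^ 2 * N ^ 2) → Fin N → ℂ)
    (hqc : ∀ i, |q i - qt i| ≤ (2 : ℝ) ^ (-(p : ℝ)))
    (hαc : ∀ i j, |(αt i j).re - (α i j).re| ≤ (2 : ℝ) ^ (-(p : ℝ)) ∧
                  |(αt i j).im - (α i j).im| ≤ (2 : ℝ) ^ (-(p : ℝ)) ∧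
                  |(αt i j).re| ≤ 1 ∧ |(αt i j).im| ≤ 1)
    (hβc : ∀ i l, |(βt i l).re - (β i l).re| ≤ (2 : ℝ) ^ (-(p : ℝ)) ∧
                  |(βt i l).im - (β i l).im| ≤ (2 : ℝ) ^ (-(p : ℝ)) ∧
                  |(βt i l).re| ≤ 1 ∧ |(βt i l).im| ≤ 1) :
    frobNorm ((∑ i, q i • prodState (α i) (β i)) - ∑ i, qt i • prodState (αt i) (βt i))
      < (M : ℝ) ^ 3 * (N : ℝ) ^ 3 * (2 : ℝ) ^ (-((p : ℝ) - 7.5)) := by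
  set ε : ℝ := (2 : ℝ) ^ (-(p : ℝ))
  have hentry : ∀ r c, ‖((∑ i, q i • prodState (α i) (β i)) -
      ∑ i, qt i • prodState (αt i) (βt i)) r c‖ ≤ (M ^ 2 * N ^ 2 : ℕ) * (31 * ε) := by
    intro r c
    rw [Matrix.sub_apply, Matrix.sum_apply, Matrix.sum_apply, ← Finset.sum_sub_distrib]
    simpa using norm_sum_le_of_le Finset.univ fun i _ => norm_smul_prodState_apply_sub_le
      (hqc i) (abs_le.mpr ⟨by linarith [(hqt i).1], (hqt i).2⟩) (hα i) (hαc i) (hβ i) (hβc i) r c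
  have h31 : (31 : ℝ) < 2 ^ (7.5 : ℝ) :=
    calc (31 : ℝ) < 2 ^ ((5 : ℕ) : ℝ) := by norm_num
      _ ≤ 2 ^ (7.5 : ℝ) := Real.rpow_le_rpow_of_exponent_le one_le_two (by norm_num)
  have hM1 : (1 : ℝ) ≤ M := by exact_mod_cast hM
  have hN1 : (1 : ℝ) ≤ N := by exact_mod_cast hN
  calc _ ≤ (Fintype.card (Fin M × Fin N) : ℝ) * ((M ^ 2 * N ^ 2 : ℕ) * (31 * ε)) :=
        frobNorm_le_of_forall_norm_apply_le (by positivity) hentry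
    _ = (M : ℝ) ^ 3 * N ^ 3 * 31 * ε := by simp; ring
    _ < (M : ℝ) ^ 3 * N ^ 3 * 2 ^ (7.5 : ℝ) * ε := by gcongr
    _ = _ := by rw [mul_assoc, ← Real.rpow_add two_pos]; ring_nf

theorem frobNorm_truncation_bound
    (M N : ℕ) (hM : 1 ≤ M) (hN : 1 ≤ N) (p : ℕ) (hp : 1 ≤ p)
    (q : Fin (M ^ 2 * N ^ 2) → ℝ) (hq : ∀ i, 0 ≤ q i ∧ q i ≤ 1) (hqs : ∑ i, q i = 1)
    (α : Fin (M ^ 2 * N ^ 2) → Fin M → ℂ) (β : Fin (M ^ 2 * N ^ 2) → Fin N → ℂ)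
    (hα : ∀ i, unitVec (α i)) (hβ : ∀ i, unitVec (β i))
    (qt : Fin (M ^ 2 * N ^ 2) → ℝ) (hqt : ∀ i, 0 ≤ qt i ∧ qt i ≤ 1)
    (αt : Fin (M ^ 2 * N ^ 2) → Fin M → ℂ) (βt : Fin (M ^ 2 * N ^ 2) → Fin N → ℂ)
    (hqc : ∀ i, |q i - qt i| ≤ (2 : ℝ) ^ (-(p : ℝ)))
    (hαc : ∀ i j, |(αt i j).re - (α i j).re| ≤ (2 : ℝ) ^ (-(p : ℝ)) ∧
                  |(αt i j).im - (α i j).im| ≤ (2 : ℝ) ^ (-(p : ℝ)) ∧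
                  |(αt i j).re| ≤ 1 ∧ |(αt i j).im| ≤ 1)
    (hβc : ∀ i l, |(βt i l).re - (β i l).re| ≤ (2 : ℝ) ^ (-(p : ℝ)) ∧
                  |(βt i l).im - (β i l).im| ≤ (2 : ℝ) ^ (-(p : ℝ)) ∧
                  |(βt i l).re| ≤ 1 ∧ |(βt i l).im| ≤ 1) :
    frobNorm ((∑ i, q i • prodState (α i) (β i)) - ∑ i, qt i • prodState (αt i) (βt i))
      < (M : ℝ) ^ 3 * (N : ℝ) ^ 3 * (2 : ℝ) ^ (-((p : ℝ) - 7.5)) :=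
  frobNorm_truncation_bound_general M N hM hN p q α β hα hβ qt hqt αt βt hqc hαc hβc
end

section
/- Let M, N, k ≥ 1. For i = 1,…,k let p̃_i ≥ 0 with Σ_j p̃_j > 0, and let α̃_i ∈ ℂ^M and β̃_i ∈ ℂ^N be nonzero vectors. Define σ̃ = Σ_i p̃_i (α̃_i α̃_iᴴ) ⊗ (β̃_i β̃_iᴴ) and σ̂ = Σ_i p̂_i (α̂_i α̂_iᴴ) ⊗ (β̂_i β̂_iᴴ), where p̂_i = p̃_i / Σ_j p̃_j, α̂_i = α̃_i / ‖α̃_i‖, and β̂_i = β̃_i / ‖β̃_i‖. Then ‖σ̂ − σ̃‖₂ ≤ Σ_i p̂_i · |1 − ‖α̃_i‖² · ‖β̃_i‖² · Σ_j p̃_j|. -/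
open scoped Matrix Kronecker BigOperators

/-!
Normalizing rescales the `i`-th product state `ρᵢ = (α̃ᵢα̃ᵢᴴ) ⊗ (β̃ᵢβ̃ᵢᴴ)` by `(‖α̃ᵢ‖²‖β̃ᵢ‖²)⁻¹`, so
`σ̂ - σ̃ = ∑ᵢ (p̂ᵢ (‖α̃ᵢ‖²‖β̃ᵢ‖²)⁻¹ - p̃ᵢ) ρᵢ`. Since the Frobenius norm is multiplicative on
Kronecker products and on rank-one matrices, `‖ρᵢ‖₂ = ‖α̃ᵢ‖²‖β̃ᵢ‖²`, and with `p̃ᵢ = p̂ᵢ ∑ⱼ p̃ⱼ`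
the triangle inequality gives the bound term by term.
-/

attribute [local instance] Matrix.frobeniusNormedAddCommGroup Matrix.frobeniusNormedSpace

namespace Matrix

variable {α : Type*} {l m n p : Type*} [Fintype l] [Fintype m] [Fintype n] [Fintype p]

theorem frobenius_norm_sq [NormedAddCommGroup α] (A : Matrix m n α) :
    ‖A‖ ^ 2 = ∑ i, ∑ j, ‖A i j‖ ^ 2 := by
  rw [frobenius_norm_def, ← Real.sqrt_eq_rpow, Real.sq_sqrt (by positivity)]
  simp only [Real.rpow_two]

variable [NormedRing α] [NormMulClass α]

theorem frobenius_norm_kronecker (A : Matrix l m α) (B : Matrix n p α) :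
    ‖A ⊗ₖ B‖ = ‖A‖ * ‖B‖ := by
  refine (sq_eq_sq₀ (norm_nonneg _) (by positivity)).1 ?_
  simp only [mul_pow, frobenius_norm_sq, Fintype.sum_prod_type, kroneckerMap_apply, norm_mul,
    Finset.sum_mul_sum]

theorem frobenius_norm_vecMulVec (a : m → α) (b : n → α) :
    ‖vecMulVec a b‖ = ‖WithLp.toLp 2 a‖ * ‖WithLp.toLp 2 b‖ := by
  refine (sq_eq_sq₀ (norm_nonneg _) (by positivity)).1 ?_
  simp only [mul_pow, frobenius_norm_sq, PiLp.norm_sq_eq_of_L2, vecMulVec_apply, norm_mul,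
    Finset.sum_mul_sum]

end Matrix

theorem frobNorm_eq_norm {n : Type*} [Fintype n] (X : Matrix n n ℂ) : frobNorm X = ‖X‖ := by
  have h : (Matrix.trace (Xᴴ * X)).re = ∑ i, ∑ j, ‖X i j‖ ^ 2 := by
    simp only [Matrix.trace, Matrix.diag, Matrix.mul_apply, Matrix.conjTranspose_apply,
      Complex.re_sum, RCLike.star_def, ← Complex.normSq_eq_norm_sq, Complex.normSq_apply,
      Complex.mul_re, Complex.conj_re, Complex.conj_im]
    rw [Finset.sum_comm]
    ring_nf
  rw [frobNorm, h, ← Matrix.frobenius_norm_sq, Real.sqrt_sq (norm_nonneg _)]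

theorem norm_outer {M : ℕ} (a : Fin M → ℂ) : ‖outer a‖ = ∑ j, Complex.normSq (a j) := by
  have h_conj : ‖WithLp.toLp 2 (fun k => (starRingEnd ℂ) (a k))‖ = ‖WithLp.toLp 2 a‖ := by
    simp [PiLp.norm_eq_of_L2]
  rw [outer, Matrix.frobenius_norm_vecMulVec, h_conj, ← sq, PiLp.norm_sq_eq_of_L2]
  simp [Complex.normSq_eq_norm_sq]

theorem norm_prodState {M N : ℕ} (a : Fin M → ℂ) (b : Fin N → ℂ) :
    ‖prodState a b‖ = (∑ j, Complex.normSq (a j)) * ∑ l, Complex.normSq (b l) := by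
  rw [prodState, Matrix.frobenius_norm_kronecker, norm_outer, norm_outer]

theorem outer_div_ofReal {M : ℕ} (a : Fin M → ℂ) (c : ℝ) :
    outer (fun j => a j / (c : ℂ)) = (c ^ 2)⁻¹ • outer a := by
  ext j k
  simp only [outer, Matrix.vecMulVec_apply, Matrix.smul_apply, Complex.real_smul, map_div₀,
    Complex.conj_ofReal]
  push_cast
  ring

theorem prodState_normalize {M N : ℕ} (a : Fin M → ℂ) (b : Fin N → ℂ) :
    prodState (fun j => a j / (Real.sqrt (∑ j', Complex.normSq (a j')) : ℂ))
        (fun l => b l / (Real.sqrt (∑ l', Complex.normSq (b l')) : ℂ))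
      = ((∑ j, Complex.normSq (a j)) * ∑ l, Complex.normSq (b l))⁻¹ • prodState a b := by
  rw [prodState, prodState, outer_div_ofReal, outer_div_ofReal, Matrix.smul_kronecker,
    Matrix.kronecker_smul, smul_smul,
    Real.sq_sqrt (Finset.sum_nonneg fun _ _ => Complex.normSq_nonneg _),
    Real.sq_sqrt (Finset.sum_nonneg fun _ _ => Complex.normSq_nonneg _),
    mul_inv]

theorem abs_div_mul_inv_sub_mul_le {p S x : ℝ} (hp : 0 ≤ p) (hS : 0 < S) (hx : 0 ≤ x) :
    |p / S * x⁻¹ - p| * x ≤ p / S * |1 - x * S| := by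
  rcases hx.eq_or_lt with rfl | hx
  · simp only [mul_zero]
    positivity
  · refine le_of_eq ?_
    calc |p / S * x⁻¹ - p| * x = |(p / S * x⁻¹ - p) * x| := by rw [abs_mul, abs_of_pos hx]
      _ = |p / S * (1 - x * S)| := by congr 1; field_simp
      _ = p / S * |1 - x * S| := by rw [abs_mul, abs_of_nonneg (by positivity)]

theorem normalization_error_bound_general
    (M N k : ℕ)
    (qt : Fin k → ℝ) (hqt : ∀ i, 0 ≤ qt i) (hsum : 0 < ∑ j, qt j)
    (αt : Fin k → Fin M → ℂ) (βt : Fin k → Fin N → ℂ) :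
    frobNorm ((∑ i, (qt i / ∑ j, qt j) • prodState
        (fun j => αt i j / (Real.sqrt (∑ j', Complex.normSq (αt i j')) : ℂ))
        (fun l => βt i l / (Real.sqrt (∑ l', Complex.normSq (βt i l')) : ℂ)))
      - ∑ i, qt i • prodState (αt i) (βt i))
    ≤ ∑ i, (qt i / ∑ j, qt j) *
        |1 - (∑ j', Complex.normSq (αt i j')) * (∑ l', Complex.normSq (βt i l')) * ∑ j, qt j| := by
  rw [frobNorm_eq_norm, ← Finset.sum_sub_distrib]
  refine (norm_sum_le _ _).trans (Finset.sum_le_sum fun i _ => ?_)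
  rw [prodState_normalize, smul_smul, ← sub_smul, norm_smul, Real.norm_eq_abs, norm_prodState]
  exact abs_div_mul_inv_sub_mul_le (hqt i) hsum (norm_prodState _ _ ▸ norm_nonneg _)

theorem normalization_error_bound
    (M N k : ℕ) (hM : 1 ≤ M) (hN : 1 ≤ N) (hk : 1 ≤ k)
    (qt : Fin k → ℝ) (hqt : ∀ i, 0 ≤ qt i) (hsum : 0 < ∑ j, qt j)
    (αt : Fin k → Fin M → ℂ) (βt : Fin k → Fin N → ℂ)
    (hαne : ∀ i, αt i ≠ 0) (hβne : ∀ i, βt i ≠ 0) :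
    frobNorm ((∑ i, (qt i / ∑ j, qt j) • prodState
        (fun j => αt i j / (Real.sqrt (∑ j', Complex.normSq (αt i j')) : ℂ))
        (fun l => βt i l / (Real.sqrt (∑ l', Complex.normSq (βt i l')) : ℂ)))
      - ∑ i, qt i • prodState (αt i) (βt i))
    ≤ ∑ i, (qt i / ∑ j, qt j) *
        |1 - (∑ j', Complex.normSq (αt i j')) * (∑ l', Complex.normSq (βt i l')) * ∑ j, qt j| :=
  normalization_error_bound_general M N k qt hqt hsum αt βt
end

section
/- Let V be a real normed vector space, let K ⊆ V be convex, and suppose K contains the closed ball of radius r > 0 centred at a point c. Let p ∈ V with p ∉ K and let δ > 0. Set p₀ = p + (δ/2)·(p − c). Then the closed ball of radius δ·r/2 centred at p₀ is disjoint from K. -/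
/-! With `t = δ / 2` and `p₀ = p + t • (p - c)`, the ball `closedBall p₀ (t * r)` is the image of
`closedBall c r ⊆ K` under the homothety `z ↦ p + t • (p - z)` of centre `p` and ratio `-t`. So a point
`q = p + t • (p - z)` of it lying in `K` would put `p` on the segment `[z, q] ⊆ K`. -/

theorem Convex.mem_of_add_smul_sub_mem {𝕜 E : Type*} [Field 𝕜] [LinearOrder 𝕜]
    [IsStrictOrderedRing 𝕜] [AddCommGroup E] [Module 𝕜 E] {K : Set E} (hK : Convex 𝕜 K)
    {p z : E} {t : 𝕜} (ht : 0 ≤ t) (hz : z ∈ K) (hq : p + t • (p - z) ∈ K) : p ∈ K := by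
  have ht₁ : 0 < 1 + t := by linarith
  have hseg : z + (1 + t)⁻¹ • (p + t • (p - z) - z) = p := by
    have : p + t • (p - z) - z = (1 + t) • (p - z) := by module
    rw [this, smul_smul, inv_mul_cancel₀ ht₁.ne', one_smul, add_sub_cancel]
  rw [← hseg]
  exact hK.add_smul_sub_mem hz hq ⟨by positivity, inv_le_one_of_one_le₀ (by linarith)⟩

theorem mem_closedBall_of_add_smul_sub_mem_closedBall {V : Type*} [SeminormedAddCommGroup V]
    [NormedSpace ℝ V] {c p q : V} {r t : ℝ} (ht : 0 < t)
    (hq : q ∈ Metric.closedBall (p + t • (p - c)) (t * r)) :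
    c + t⁻¹ • (p + t • (p - c) - q) ∈ Metric.closedBall c r := by
  rw [mem_closedBall_iff_norm, add_sub_cancel_left, norm_smul, Real.norm_of_nonneg (by positivity),
    inv_mul_le_iff₀ ht, ← dist_eq_norm, dist_comm]
  exact hq

theorem Convex.disjoint_closedBall_add_smul_sub {V : Type*} [SeminormedAddCommGroup V]
    [NormedSpace ℝ V] {K : Set V} (hK : Convex ℝ K) {c p : V} {r t : ℝ}
    (hball : Metric.closedBall c r ⊆ K) (hp : p ∉ K) (ht : 0 < t) :
    Disjoint (Metric.closedBall (p + t • (p - c)) (t * r)) K := by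
  rw [Set.disjoint_left]
  intro q hq hqK
  set z := c + t⁻¹ • (p + t • (p - c) - q)
  have hzK : z ∈ K := hball (mem_closedBall_of_add_smul_sub_mem_closedBall ht hq)
  have hqz : p + t • (p - z) = q := by
    rw [sub_add_eq_sub_sub, smul_sub, smul_smul, mul_inv_cancel₀ ht.ne', one_smul]
    abel
  exact hp (hK.mem_of_add_smul_sub_mem ht.le hzK (hqz ▸ hqK))

theorem shifted_ball_disjoint_of_not_mem_convex_general
    {V : Type*} [NormedAddCommGroup V] [NormedSpace ℝ V]
    (K : Set V) (hK : Convex ℝ K) (c : V) (r : ℝ)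
    (hball : Metric.closedBall c r ⊆ K) (p : V) (hp : p ∉ K) (δ : ℝ) (hδ : 0 < δ) :
    Disjoint (Metric.closedBall (p + (δ / 2) • (p - c)) (δ * r / 2)) K := by
  rw [mul_div_right_comm]
  exact hK.disjoint_closedBall_add_smul_sub hball hp (half_pos hδ)

theorem shifted_ball_disjoint_of_not_mem_convex
    {V : Type*} [NormedAddCommGroup V] [NormedSpace ℝ V]
    (K : Set V) (hK : Convex ℝ K) (c : V) (r : ℝ) (hr : 0 < r)
    (hball : Metric.closedBall c r ⊆ K) (p : V) (hp : p ∉ K) (δ : ℝ) (hδ : 0 < δ) :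
    Disjoint (Metric.closedBall (p + (δ / 2) • (p - c)) (δ * r / 2)) K :=
  shifted_ball_disjoint_of_not_mem_convex_general K hK c r hball p hp δ hδ
end

section
/- (Motzkin–Straus) Let G be a simple graph on vertex set Fin n with n ≥ 1, let A_G be its real n×n adjacency matrix ((A_G)_{ij} = 1 if {i,j} is an edge of G and 0 otherwise), and let κ be the clique number of G (the size of a largest clique; κ ≥ 1 since single vertices are cliques). Then the maximum of yᵀ A_G y over the standard simplex Δ_n = {y ∈ ℝⁿ : y_i ≥ 0 for all i, Σ_i y_i = 1} exists and equals 1 − 1/κ. -/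
/-!
Write `Q y = ∑ i j, A i j * y i * y j` for the adjacency form. If `i ≠ j` are non-adjacent then
`Q (eᵢ - eⱼ) = 0`, so `Q` is affine along the direction `eᵢ - eⱼ`; moving all the mass of one of
`i`, `j` onto the other therefore does not decrease `Q` and shrinks the support. Iterating, every
point of the simplex is dominated by one supported on a clique `s`. There
`Q y = (∑ yᵢ)² - ∑ yᵢ² = 1 - ∑ yᵢ² ≤ 1 - 1 / #s` by Cauchy–Schwarz, with equality for the uniform
distribution on `s`.
-/

open Finset Matrix QuadraticMap

namespace SimpleGraph

lemma isGreatest_cliqueNum {α : Type*} [Finite α] (G : SimpleGraph α) :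
    IsGreatest {k | ∃ s, G.IsNClique k s} G.cliqueNum :=
  ⟨G.exists_isNClique_cliqueNum, fun _ ⟨_, hs⟩ ↦ hs.card_eq ▸ hs.isClique.card_le_cliqueNum⟩

lemma cliqueNum_pos {α : Type*} [Finite α] [Nonempty α] (G : SimpleGraph α) : 0 < G.cliqueNum := by
  obtain ⟨v⟩ := ‹Nonempty α›
  exact Nat.succ_le_iff.mp
    (by simpa using IsClique.card_le_cliqueNum (G := G) (t := {v}) (tc := by simp))

variable {V 𝕜 : Type*} [Fintype V] [DecidableEq V] (G : SimpleGraph V) [DecidableRel G.Adj]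

section CommRing

variable (𝕜) [CommRing 𝕜]

def adjQuadraticForm : QuadraticForm 𝕜 (V → 𝕜) := (G.adjMatrix 𝕜).toQuadraticForm'

variable {𝕜}

lemma adjQuadraticForm_apply (y : V → 𝕜) :
    G.adjQuadraticForm 𝕜 y = ∑ i, ∑ j, G.adjMatrix 𝕜 i j * y i * y j := by
  simp [adjQuadraticForm, toQuadraticForm', toLinearMap₂'_apply, mul_comm]

lemma adjQuadraticForm_single_sub_single {i j : V} (h : ¬G.Adj i j) :
    G.adjQuadraticForm 𝕜 (Pi.single i 1 - Pi.single j 1) = 0 := by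
  simp [adjQuadraticForm, toQuadraticForm', toLinearMap₂'_apply', mulVec_sub, dotProduct_sub, h,
    G.adj_comm j i]

lemma adjQuadraticForm_add_smul_single_sub_single {i j : V} (h : ¬G.Adj i j) (y : V → 𝕜)
    (t : 𝕜) :
    G.adjQuadraticForm 𝕜 (y + t • (Pi.single i 1 - Pi.single j 1)) =
      G.adjQuadraticForm 𝕜 y +
        t * polar (G.adjQuadraticForm 𝕜) y (Pi.single i 1 - Pi.single j 1) := by
  have hpolar := (G.adjQuadraticForm 𝕜).polar_smul_right t y (Pi.single i 1 - Pi.single j 1)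
  rw [polar, QuadraticMap.map_smul, G.adjQuadraticForm_single_sub_single h] at hpolar
  simp only [smul_eq_mul] at hpolar
  linear_combination hpolar

lemma adjQuadraticForm_of_isClique_support {y : V → 𝕜} (hy : G.IsClique (Function.support y)) :
    G.adjQuadraticForm 𝕜 y = (∑ i, y i) ^ 2 - ∑ i, y i ^ 2 := by
  have hterm (i j : V) :
      G.adjMatrix 𝕜 i j * y i * y j = y i * y j - if i = j then y i * y j else 0 := by
    by_cases hij : i = j
    · simp [hij]
    by_cases hyi : y i = 0
    · simp [hyi]
    by_cases hyj : y j = 0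
    · simp [hyj]
    simp [hij, hy hyi hyj hij]
  simp_rw [adjQuadraticForm_apply, hterm, sum_sub_distrib, sum_ite_eq, mem_univ, if_true,
    _root_.sq, sum_mul_sum]

end CommRing

section LinearOrderedField

variable [Field 𝕜] [LinearOrder 𝕜] [IsStrictOrderedRing 𝕜]

lemma exists_mem_stdSimplex_adjQuadraticForm_eq_of_isNClique {k : ℕ} {s : Finset V}
    (hs : G.IsNClique k s) (hk : k ≠ 0) :
    ∃ y ∈ stdSimplex 𝕜 V, G.adjQuadraticForm 𝕜 y = 1 - 1 / k := by
  set y : V → 𝕜 := fun i ↦ if i ∈ s then (k : 𝕜)⁻¹ else 0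
  have hk' : (k : 𝕜) ≠ 0 := Nat.cast_ne_zero.mpr hk
  have hsum : ∑ i, y i = 1 := by simp [y, hs.card_eq, hk']
  have hcl : G.IsClique (Function.support y) :=
    hs.isClique.subset fun i hi ↦ by simp only [Function.mem_support, y] at hi; simp_all
  refine ⟨y, ⟨fun i ↦ by positivity, hsum⟩, ?_⟩
  rw [G.adjQuadraticForm_of_isClique_support hcl, hsum]
  simp [y, hs.card_eq]
  field_simp

lemma add_smul_single_sub_single_mem_stdSimplex {y : V → 𝕜} (hy : y ∈ stdSimplex 𝕜 V)
    {i j : V} {t : 𝕜} (hti : -y i ≤ t) (htj : t ≤ y j) :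
    y + t • (Pi.single i 1 - Pi.single j 1) ∈ stdSimplex 𝕜 V := by
  refine ⟨fun k ↦ ?_, ?_⟩
  · have := hy.1 k
    simp only [Pi.add_apply, Pi.smul_apply, Pi.sub_apply, Pi.single_apply, smul_eq_mul]
    split_ifs <;> subst_vars <;> linarith
  · simp [sum_add_distrib, ← mul_sum, sum_sub_distrib, hy.2]

lemma exists_support_ssubset_le {y : V → 𝕜} (hy : y ∈ stdSimplex 𝕜 V) {i j : V} (hi : y i ≠ 0)
    (hj : y j ≠ 0) (hne : i ≠ j) (hadj : ¬G.Adj i j) :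
    ∃ z ∈ stdSimplex 𝕜 V, Function.support z ⊂ Function.support y ∧
      G.adjQuadraticForm 𝕜 y ≤ G.adjQuadraticForm 𝕜 z := by
  -- Swapping `i` and `j` negates the slope of `Q` along `eᵢ - eⱼ`.
  wlog hc : 0 ≤ polar (G.adjQuadraticForm 𝕜) y (Pi.single i 1 - Pi.single j 1) generalizing i j
  · refine this hj hi hne.symm (fun h ↦ hadj h.symm) ?_
    rw [← neg_sub, polar_neg_right]
    linarith
  have hyi := hy.1 i
  have hyj := hy.1 j
  refine ⟨y + y j • (Pi.single i 1 - Pi.single j 1),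
    add_smul_single_sub_single_mem_stdSimplex hy (by linarith) le_rfl,
    ⟨fun k hk ↦ ?_, fun h ↦ ?_⟩, ?_⟩
  · by_cases hki : k = i
    · exact hki ▸ hi
    by_cases hkj : k = j
    · simp_all
    simpa [Pi.single_apply, hki, hkj] using hk
  · simpa [hne.symm] using h hj
  · rw [G.adjQuadraticForm_add_smul_single_sub_single hadj]
    exact le_add_of_nonneg_right (mul_nonneg hyj hc)

theorem exists_isClique_support_le {y : V → 𝕜} (hy : y ∈ stdSimplex 𝕜 V) :
    ∃ z ∈ stdSimplex 𝕜 V, G.IsClique (Function.support z) ∧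
      G.adjQuadraticForm 𝕜 y ≤ G.adjQuadraticForm 𝕜 z := by
  induction h : (Function.support y).ncard using Nat.strong_induction_on generalizing y with
  | _ m ih =>
  by_cases hcl : G.IsClique (Function.support y)
  · exact ⟨y, hy, hcl, le_rfl⟩
  obtain ⟨i, hi, j, hj, hne, hadj⟩ :
      ∃ i ∈ Function.support y, ∃ j ∈ Function.support y, i ≠ j ∧ ¬G.Adj i j := by
    simpa [IsClique, Set.Pairwise] using hcl
  obtain ⟨z, hz, hzy, hyz⟩ := G.exists_support_ssubset_le hy hi hj hne hadj
  obtain ⟨w, hw, hwcl, hzw⟩ := ih _ (h ▸ Set.ncard_lt_ncard hzy (Set.toFinite _)) hz rfl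
  exact ⟨w, hw, hwcl, hyz.trans hzw⟩

lemma adjQuadraticForm_le_of_isClique_support {z : V → 𝕜} (hz : z ∈ stdSimplex 𝕜 V)
    (hcl : G.IsClique (Function.support z)) : G.adjQuadraticForm 𝕜 z ≤ 1 - 1 / G.cliqueNum := by
  set s : Finset V := {i | z i ≠ 0}
  have hs : ∑ i ∈ s, z i = 1 := by rw [sum_filter_ne_zero, hz.2]
  have hcard : (#s : 𝕜) ≤ G.cliqueNum := by
    exact_mod_cast IsClique.card_le_cliqueNum (tc := by simpa [s, Function.support] using hcl)
  have hsq : 1 ≤ (G.cliqueNum : 𝕜) * ∑ i, z i ^ 2 := calc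
    (1 : 𝕜) = (∑ i ∈ s, z i) ^ 2 := by rw [hs, one_pow]
    _ ≤ #s * ∑ i ∈ s, z i ^ 2 := sq_sum_le_card_mul_sum_sq
    _ ≤ G.cliqueNum * ∑ i, z i ^ 2 :=
      mul_le_mul hcard (sum_le_univ_sum_of_nonneg fun i ↦ sq_nonneg (z i))
        (sum_nonneg fun i _ ↦ sq_nonneg (z i)) (Nat.cast_nonneg _)
  have hpos : (0 : 𝕜) < G.cliqueNum := by
    by_contra! h
    nlinarith [sum_nonneg fun i (_ : i ∈ univ) ↦ sq_nonneg (z i),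
      (Nat.cast_nonneg _ : (0 : 𝕜) ≤ G.cliqueNum)]
  rw [G.adjQuadraticForm_of_isClique_support hcl, hz.2, one_pow]
  apply sub_le_sub_left
  rw [div_le_iff₀ hpos]
  linarith

theorem isGreatest_adjQuadraticForm_stdSimplex [Nonempty V] :
    IsGreatest (G.adjQuadraticForm 𝕜 '' stdSimplex 𝕜 V) (1 - 1 / G.cliqueNum) := by
  refine ⟨?_, ?_⟩
  · obtain ⟨s, hs⟩ := G.exists_isNClique_cliqueNum
    exact G.exists_mem_stdSimplex_adjQuadraticForm_eq_of_isNClique hs G.cliqueNum_pos.ne'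
  · rintro _ ⟨y, hy, rfl⟩
    obtain ⟨z, hz, hcl, hyz⟩ := G.exists_isClique_support_le hy
    exact hyz.trans (G.adjQuadraticForm_le_of_isClique_support hz hcl)

end LinearOrderedField

end SimpleGraph

theorem motzkin_straus
    (n : ℕ) (hn : 1 ≤ n) (G : SimpleGraph (Fin n)) [DecidableRel G.Adj]
    (κ : ℕ) (hκ : IsGreatest {k : ℕ | ∃ s : Finset (Fin n), G.IsNClique k s} κ) :
    IsGreatest {r : ℝ | ∃ y ∈ stdSimplex ℝ (Fin n),
        r = ∑ i, ∑ j, (G.adjMatrix ℝ) i j * y i * y j} (1 - 1 / (κ : ℝ)) := by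
  have : Nonempty (Fin n) := ⟨⟨0, hn⟩⟩
  rw [hκ.unique G.isGreatest_cliqueNum]
  simpa only [Set.image, SimpleGraph.adjQuadraticForm_apply, eq_comm] using
    G.isGreatest_adjQuadraticForm_stdSimplex (𝕜 := ℝ)
end

section
/- Let G be a simple graph on vertex set Fin n with n ≥ 1, let A_G be its real n×n adjacency matrix, and let c ≥ 1 be an integer. Then G has a clique of size at least c if and only if there exists y in the standard simplex Δ_n with yᵀ A_G y ≥ 1 − 1/c. -/
/-!
The uniform weight on a clique of size `k` gives the value `1 - 1/k`. Conversely, if the support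
of `y` contains two non-adjacent vertices `i` and `j`, the form is affine along `e_j - e_i` (its
quadratic part `A i i + A j j - 2 A i j` vanishes), so moving all the mass of one of them onto the
other does not decrease the value and shrinks the support. When the support `S` is a clique,
`yᵀ A y ≤ (∑ y)² - ‖y‖² ≤ 1 - 1/|S|` by Cauchy–Schwarz.
-/

open Finset Matrix

theorem Matrix.IsSymm.add_dotProduct_mulVec_add {R n : Type*} [CommRing R] [Fintype n]
    {A : Matrix n n R} (hA : A.IsSymm) (y d : n → R) :
    (y + d) ⬝ᵥ A *ᵥ (y + d) = y ⬝ᵥ A *ᵥ y + 2 * (d ⬝ᵥ A *ᵥ y) + d ⬝ᵥ A *ᵥ d := by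
  have hsymm : y ⬝ᵥ A *ᵥ d = d ⬝ᵥ A *ᵥ y := by
    rw [dotProduct_mulVec, ← mulVec_transpose, hA.eq, dotProduct_comm]
  simp only [mulVec_add, add_dotProduct, dotProduct_add, hsymm]
  ring

theorem Finset.sq_sum_div_card_le_dotProduct_self {ι : Type*} [Fintype ι] {s : Finset ι}
    {y : ι → ℝ} (hys : ∀ k ∉ s, y k = 0) : (∑ i, y i) ^ 2 / #s ≤ y ⬝ᵥ y := by
  have hsum : ∀ f : ι → ℝ, (∀ k ∉ s, f k = 0) → ∑ i ∈ s, f i = ∑ i, f i := fun f hf =>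
    sum_subset (subset_univ s) fun k _ hk => hf k hk
  rw [← hsum y hys, dotProduct, ← hsum (fun i => y i * y i) fun k hk => by simp [hys k hk]]
  simp only [← sq]
  exact div_le_of_le_mul₀ (by positivity) (by positivity)
    ((sq_sum_le_card_mul_sum_sq ..).trans_eq (mul_comm ..))

namespace SimpleGraph

variable {V : Type*} [Fintype V] (G : SimpleGraph V) [DecidableRel G.Adj]

theorem dotProduct_adjMatrix_mulVec_eq_sum (y : V → ℝ) :
    y ⬝ᵥ G.adjMatrix ℝ *ᵥ y = ∑ i, ∑ j, G.adjMatrix ℝ i j * y i * y j := by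
  simp only [dotProduct, mulVec, mul_sum]
  exact sum_congr rfl fun i _ => sum_congr rfl fun j _ => by ring

theorem dotProduct_adjMatrix_mulVec_mono {H : SimpleGraph V} [DecidableRel H.Adj] (hGH : G ≤ H)
    {y : V → ℝ} (hy : 0 ≤ y) :
    y ⬝ᵥ G.adjMatrix ℝ *ᵥ y ≤ y ⬝ᵥ H.adjMatrix ℝ *ᵥ y := by
  simp only [dotProduct_adjMatrix_mulVec_eq_sum]
  refine sum_le_sum fun i _ => sum_le_sum fun j _ => ?_
  have hij : G.adjMatrix ℝ i j ≤ H.adjMatrix ℝ i j := by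
    simp only [adjMatrix_apply]
    split_ifs with hG hH <;> first | exact absurd (hGH hG) hH | norm_num
  exact mul_le_mul_of_nonneg_right (mul_le_mul_of_nonneg_right hij (hy i)) (hy j)

theorem dotProduct_adjMatrix_mulVec_completeGraph [DecidableEq V] (y : V → ℝ) :
    y ⬝ᵥ (completeGraph V).adjMatrix ℝ *ᵥ y = (∑ i, y i) ^ 2 - y ⬝ᵥ y := by
  rw [adjMatrix_completeGraph_eq_of_one_sub_one, sub_mulVec, one_mulVec, dotProduct_sub]
  simp [dotProduct, mulVec, sum_mul, sq]

theorem dotProduct_adjMatrix_mulVec_eq_completeGraph_of_isClique [DecidableEq V] {s : Finset V}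
    (hs : G.IsClique (s : Set V)) {y : V → ℝ} (hys : ∀ k ∉ s, y k = 0) :
    y ⬝ᵥ G.adjMatrix ℝ *ᵥ y = y ⬝ᵥ (completeGraph V).adjMatrix ℝ *ᵥ y := by
  simp only [dotProduct_adjMatrix_mulVec_eq_sum]
  refine sum_congr rfl fun i _ => sum_congr rfl fun j _ => ?_
  by_cases hi : i ∈ s
  · by_cases hj : j ∈ s
    · by_cases hij : i = j
      · simp [hij]
      · simp [adjMatrix_apply, hs hi hj hij, hij]
    · simp [hys j hj]
  · simp [hys i hi]

theorem dotProduct_adjMatrix_mulVec_transfer [DecidableEq V] {i j : V} (hij : ¬G.Adj i j)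
    (y : V → ℝ) (t : ℝ) :
    (y + (Pi.single j t - Pi.single i t)) ⬝ᵥ G.adjMatrix ℝ *ᵥ (y + (Pi.single j t - Pi.single i t))
      = y ⬝ᵥ G.adjMatrix ℝ *ᵥ y + 2 * t * ((G.adjMatrix ℝ *ᵥ y) j - (G.adjMatrix ℝ *ᵥ y) i) := by
  rw [(G.isSymm_adjMatrix (α := ℝ)).add_dotProduct_mulVec_add]
  have hji : ¬G.Adj j i := fun h => hij h.symm
  simp [sub_dotProduct, mulVec_sub, mulVec_single, single_dotProduct, adjMatrix_apply, hij, hji]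
  ring

theorem exists_mem_stdSimplex_dotProduct_adjMatrix_mulVec_eq [DecidableEq V] {s : Finset V}
    (hs : G.IsClique (s : Set V)) (hne : s.Nonempty) :
    ∃ y ∈ stdSimplex ℝ V, y ⬝ᵥ G.adjMatrix ℝ *ᵥ y = 1 - 1 / #s := by
  have hcard : (#s : ℝ) ≠ 0 := by simpa using hne.ne_empty
  set y : V → ℝ := fun k => if k ∈ s then (#s : ℝ)⁻¹ else 0
  have hsum : ∑ i, y i = 1 := by simp [y, sum_ite_mem, hcard]
  have hsq : y ⬝ᵥ y = 1 / #s := by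
    simp [y, dotProduct, ite_mul, sum_ite_mem]
    field_simp
  refine ⟨y, ⟨fun k => by positivity, hsum⟩, ?_⟩
  rw [G.dotProduct_adjMatrix_mulVec_eq_completeGraph_of_isClique hs fun k hk => if_neg hk,
    dotProduct_adjMatrix_mulVec_completeGraph, hsum, hsq, one_pow]

theorem exists_erase_support_le_dotProduct_adjMatrix_mulVec [DecidableEq V] {S : Finset V}
    {y : V → ℝ} (hy : y ∈ stdSimplex ℝ V) (hyS : ∀ k ∉ S, y k = 0) {i j : V} (hi : i ∈ S)
    (hj : j ∈ S) (hij : i ≠ j) (hadj : ¬G.Adj i j) :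
    ∃ k ∈ S, ∃ y' ∈ stdSimplex ℝ V, (∀ l ∉ S.erase k, y' l = 0) ∧
      y ⬝ᵥ G.adjMatrix ℝ *ᵥ y ≤ y' ⬝ᵥ G.adjMatrix ℝ *ᵥ y' := by
  wlog hle : (G.adjMatrix ℝ *ᵥ y) i ≤ (G.adjMatrix ℝ *ᵥ y) j generalizing i j
  · exact this hj hi hij.symm (fun h => hadj h.symm) (le_of_not_ge hle)
  refine ⟨i, hi, y + (Pi.single j (y i) - Pi.single i (y i)), ⟨fun k => ?_, ?_⟩, fun l hl => ?_, ?_⟩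
  · rcases eq_or_ne k i with rfl | hki
    · simp [hij]
    rcases eq_or_ne k j with rfl | hkj
    · simpa [Pi.single_apply, hij.symm] using add_nonneg (hy.1 k) (hy.1 i)
    · simpa [Pi.single_apply, hki, hkj] using hy.1 k
  · simp [sum_add_distrib, sum_sub_distrib, hy.2]
  · rcases eq_or_ne l i with rfl | hli
    · simp [hij]
    have hlS : l ∉ S := fun h => hl (mem_erase.2 ⟨hli, h⟩)
    have hlj : l ≠ j := fun h => hlS (h ▸ hj)
    simp [hli, hlj, hyS l hlS]
  · rw [G.dotProduct_adjMatrix_mulVec_transfer hadj]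
    have := hy.1 i
    nlinarith

theorem exists_isClique_dotProduct_adjMatrix_mulVec_le [DecidableEq V] (S : Finset V)
    {y : V → ℝ} (hy : y ∈ stdSimplex ℝ V) (hyS : ∀ k ∉ S, y k = 0) :
    ∃ s : Finset V, s.Nonempty ∧ G.IsClique (s : Set V) ∧
      y ⬝ᵥ G.adjMatrix ℝ *ᵥ y ≤ 1 - 1 / #s := by
  induction S using Finset.strongInduction generalizing y with
  | H S ih =>
  by_cases hS : G.IsClique (S : Set V)
  · have hne : S.Nonempty := by
      by_contra h
      have hy0 : y = 0 := funext fun k => hyS k (by simp [not_nonempty_iff_eq_empty.1 h])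
      simpa [hy0] using hy.2
    refine ⟨S, hne, hS, ?_⟩
    calc y ⬝ᵥ G.adjMatrix ℝ *ᵥ y ≤ y ⬝ᵥ (completeGraph V).adjMatrix ℝ *ᵥ y :=
          G.dotProduct_adjMatrix_mulVec_mono le_top hy.1
      _ = 1 - y ⬝ᵥ y := by rw [dotProduct_adjMatrix_mulVec_completeGraph, hy.2, one_pow]
      _ ≤ 1 - 1 / #S := by
          have := sq_sum_div_card_le_dotProduct_self hyS
          rw [hy.2, one_pow] at this
          linarith
  · obtain ⟨i, hi, j, hj, hij, hadj⟩ : ∃ i ∈ S, ∃ j ∈ S, i ≠ j ∧ ¬G.Adj i j := by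
      simpa [isClique_iff, Set.Pairwise] using hS
    obtain ⟨k, hk, y', hy', hy'S, hle⟩ :=
      G.exists_erase_support_le_dotProduct_adjMatrix_mulVec hy hyS hi hj hij hadj
    obtain ⟨s, hne, hs, hle'⟩ := ih (S.erase k) (erase_ssubset hk) hy' hy'S
    exact ⟨s, hne, hs, hle.trans hle'⟩

end SimpleGraph

theorem clique_iff_simplex_quadratic_form_general
    (n : ℕ) (G : SimpleGraph (Fin n)) [DecidableRel G.Adj]
    (c : ℕ) (hc : 1 ≤ c) :
    (∃ s : Finset (Fin n), c ≤ s.card ∧ G.IsClique (s : Set (Fin n))) ↔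
      ∃ y ∈ stdSimplex ℝ (Fin n),
        1 - 1 / (c : ℝ) ≤ ∑ i, ∑ j, (G.adjMatrix ℝ) i j * y i * y j := by
  simp only [← G.dotProduct_adjMatrix_mulVec_eq_sum]
  have hc' : (0 : ℝ) < c := by exact_mod_cast hc
  constructor
  · rintro ⟨s, hcs, hs⟩
    obtain ⟨y, hy, hQ⟩ := G.exists_mem_stdSimplex_dotProduct_adjMatrix_mulVec_eq hs
      (card_pos.1 (hc.trans hcs))
    refine ⟨y, hy, hQ ▸ ?_⟩
    gcongr
  · rintro ⟨y, hy, hQ⟩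
    obtain ⟨s, hne, hs, hle⟩ := G.exists_isClique_dotProduct_adjMatrix_mulVec_le univ hy (by simp)
    refine ⟨s, ?_, hs⟩
    have hs' : (0 : ℝ) < #s := by exact_mod_cast hne.card_pos
    exact_mod_cast (one_div_le_one_div hs' hc').1 (by linarith)

theorem clique_iff_simplex_quadratic_form
    (n : ℕ) (hn : 1 ≤ n) (G : SimpleGraph (Fin n)) [DecidableRel G.Adj]
    (c : ℕ) (hc : 1 ≤ c) :
    (∃ s : Finset (Fin n), c ≤ s.card ∧ G.IsClique (s : Set (Fin n))) ↔
      ∃ y ∈ stdSimplex ℝ (Fin n),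
        1 - 1 / (c : ℝ) ≤ ∑ i, ∑ j, (G.adjMatrix ℝ) i j * y i * y j :=
  clique_iff_simplex_quadratic_form_general n G c hc
end

section
/- Let M, N ≥ 1 and δ ≥ 0. Let 𝒩 be a finite nonempty set of unit vectors in ℂ^M which is a δ-net of the unit sphere of ℂ^M: for every unit vector x ∈ ℂ^M there exists x_i ∈ 𝒩 with ‖x − x_i‖₂ ≤ δ. Let A be a Hermitian complex matrix indexed by (Fin M) × (Fin N). Let m* be the maximum of (a⊗b)ᴴ A (a⊗b) over unit vectors a ∈ ℂ^M and b ∈ ℂ^N, and let m̃ be the maximum of (x_i⊗b)ᴴ A (x_i⊗b) over x_i ∈ 𝒩 and unit vectors b ∈ ℂ^N (both maxima exist by compactness). Then m̃ ≤ m* ≤ m̃ + 2δ·‖A‖₂, where ‖A‖₂ = √(tr(AᴴA)) is the Frobenius norm. -/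
open scoped Matrix BigOperators

/-- The tensor (Kronecker) product of two vectors. -/
def kvec {M N : ℕ} (a : Fin M → ℂ) (b : Fin N → ℂ) : Fin M × Fin N → ℂ :=
  fun p => a p.1 * b p.2

/-!
Take a maximiser `a ⊗ b` of the product problem and a net point `v` with `‖a - v‖ ≤ δ`.
Writing `x*Ax - w*Aw = x*A(x - w) + (x - w)*Aw`, Cauchy–Schwarz together with
`‖Ay‖ ≤ ‖A‖_F ‖y‖` bounds the change of the quadratic form by `‖A‖_F (‖x‖ + ‖w‖) ‖x - w‖`.
For `x = a ⊗ b`, `w = v ⊗ b` both have norm one and `‖x - w‖ = ‖a - v‖ ‖b‖ ≤ δ`.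
-/

open WithLp

theorem norm_star_dotProduct_le {𝕜 : Type*} [RCLike 𝕜] {n : Type*} [Fintype n] (x y : n → 𝕜) :
    ‖star x ⬝ᵥ y‖ ≤ ‖toLp 2 x‖ * ‖toLp 2 y‖ := by
  simpa only [EuclideanSpace.inner_toLp_toLp, dotProduct_comm]
    using norm_inner_le_norm (𝕜 := 𝕜) (toLp 2 x) (toLp 2 y)

section Frobenius

attribute [local instance] Matrix.frobeniusNormedAddCommGroup

variable {𝕜 : Type*} [RCLike 𝕜] {m n : Type*} [Fintype m] [Fintype n]

theorem norm_toLp_mulVec_le_frobenius_norm_mul (A : Matrix m n 𝕜) (x : n → 𝕜) :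
    ‖toLp 2 (A *ᵥ x)‖ ≤ ‖A‖ * ‖toLp 2 x‖ := by
  simpa only [← Matrix.replicateCol_mulVec, Matrix.frobenius_norm_replicateCol]
    using Matrix.frobenius_norm_mul A (Matrix.replicateCol Unit x)

theorem frobNorm_eq_frobenius_norm (A : Matrix n n ℂ) : frobNorm A = ‖A‖ := by
  rw [frobNorm, Matrix.frobenius_norm_def, ← Real.sqrt_eq_rpow]
  congr 1
  simp only [Matrix.trace, Matrix.diag, Matrix.mul_apply, Matrix.conjTranspose_apply,
    Complex.re_sum, Real.rpow_two, ← Complex.normSq_eq_norm_sq]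
  rw [Finset.sum_comm]
  simp [mul_comm, Complex.mul_conj]

theorem norm_star_dotProduct_mulVec_le (A : Matrix m n 𝕜) (x : m → 𝕜) (y : n → 𝕜) :
    ‖star x ⬝ᵥ A *ᵥ y‖ ≤ ‖A‖ * ‖toLp 2 x‖ * ‖toLp 2 y‖ :=
  calc ‖star x ⬝ᵥ A *ᵥ y‖ ≤ ‖toLp 2 x‖ * ‖toLp 2 (A *ᵥ y)‖ := norm_star_dotProduct_le x _
    _ ≤ ‖toLp 2 x‖ * (‖A‖ * ‖toLp 2 y‖) := by
      gcongr; exact norm_toLp_mulVec_le_frobenius_norm_mul A y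
    _ = ‖A‖ * ‖toLp 2 x‖ * ‖toLp 2 y‖ := by ring

theorem norm_star_dotProduct_mulVec_sub_le (A : Matrix n n 𝕜) (x w : n → 𝕜) :
    ‖star x ⬝ᵥ A *ᵥ x - star w ⬝ᵥ A *ᵥ w‖ ≤
      ‖A‖ * (‖toLp 2 x‖ + ‖toLp 2 w‖) * ‖toLp 2 (x - w)‖ := by
  have hsplit : star x ⬝ᵥ A *ᵥ x - star w ⬝ᵥ A *ᵥ w =
      star x ⬝ᵥ A *ᵥ (x - w) + star (x - w) ⬝ᵥ A *ᵥ w := by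
    simp only [Matrix.mulVec_sub, dotProduct_sub, star_sub, sub_dotProduct]
    abel
  calc ‖star x ⬝ᵥ A *ᵥ x - star w ⬝ᵥ A *ᵥ w‖
      ≤ ‖star x ⬝ᵥ A *ᵥ (x - w)‖ + ‖star (x - w) ⬝ᵥ A *ᵥ w‖ := hsplit ▸ norm_add_le _ _
    _ ≤ ‖A‖ * ‖toLp 2 x‖ * ‖toLp 2 (x - w)‖ + ‖A‖ * ‖toLp 2 (x - w)‖ * ‖toLp 2 w‖ :=
      add_le_add (norm_star_dotProduct_mulVec_le A x _) (norm_star_dotProduct_mulVec_le A _ w)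
    _ = ‖A‖ * (‖toLp 2 x‖ + ‖toLp 2 w‖) * ‖toLp 2 (x - w)‖ := by ring

end Frobenius

theorem sqrt_sum_normSq_eq_norm_toLp {n : Type*} [Fintype n] (x : n → ℂ) :
    √(∑ i, Complex.normSq (x i)) = ‖toLp 2 x‖ := by
  simp [EuclideanSpace.norm_eq, Complex.normSq_eq_norm_sq]

theorem unitVec_iff_norm_toLp_eq_one {M : ℕ} (a : Fin M → ℂ) :
    unitVec a ↔ ‖toLp 2 a‖ = 1 := by
  rw [unitVec, ← sqrt_sum_normSq_eq_norm_toLp, Real.sqrt_eq_one]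

theorem norm_toLp_kvec {M N : ℕ} (a : Fin M → ℂ) (b : Fin N → ℂ) :
    ‖toLp 2 (kvec a b)‖ = ‖toLp 2 a‖ * ‖toLp 2 b‖ := by
  rw [EuclideanSpace.norm_eq, EuclideanSpace.norm_eq, EuclideanSpace.norm_eq,
    ← Real.sqrt_mul (by positivity), Finset.sum_mul_sum, ← Finset.sum_product']
  simp only [Finset.univ_product_univ, kvec, norm_mul, mul_pow]

theorem kvec_sub_kvec {M N : ℕ} (a v : Fin M → ℂ) (b : Fin N → ℂ) :
    kvec a b - kvec v b = kvec (a - v) b := by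
  funext p
  simp only [kvec, Pi.sub_apply, sub_mul]

theorem net_maximum_error_bound_general
    (M N : ℕ) (δ : ℝ)
    (𝒩 : Finset (Fin M → ℂ))
    (h𝒩unit : ∀ v ∈ 𝒩, unitVec v)
    (h𝒩net : ∀ x : Fin M → ℂ, unitVec x →
      ∃ v ∈ 𝒩, Real.sqrt (∑ j, Complex.normSq (x j - v j)) ≤ δ)
    (A : Matrix (Fin M × Fin N) (Fin M × Fin N) ℂ)
    (mstar mtil : ℝ)
    (hmstar : IsGreatest {r : ℝ | ∃ a b, unitVec a ∧ unitVec b ∧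
        r = ((star (kvec a b)) ⬝ᵥ A.mulVec (kvec a b)).re} mstar)
    (hmtil : IsGreatest {r : ℝ | ∃ v ∈ 𝒩, ∃ b, unitVec b ∧
        r = ((star (kvec v b)) ⬝ᵥ A.mulVec (kvec v b)).re} mtil) :
    mtil ≤ mstar ∧ mstar ≤ mtil + 2 * δ * frobNorm A := by
  refine ⟨?_, ?_⟩
  · obtain ⟨v, hv, b, hb, rfl⟩ := hmtil.1
    exact hmstar.2 ⟨v, b, h𝒩unit v hv, hb, rfl⟩
  obtain ⟨a, b, ha, hb, rfl⟩ := hmstar.1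
  obtain ⟨v, hv, hav⟩ := h𝒩net a ha
  have hnet : (star (kvec v b) ⬝ᵥ A *ᵥ kvec v b).re ≤ mtil := hmtil.2 ⟨v, hv, b, hb, rfl⟩
  rw [unitVec_iff_norm_toLp_eq_one] at ha hb
  have hv1 := (unitVec_iff_norm_toLp_eq_one v).1 (h𝒩unit v hv)
  have hnear : ‖toLp 2 (kvec a b - kvec v b)‖ ≤ δ := by
    rw [kvec_sub_kvec, norm_toLp_kvec, hb, mul_one, ← sqrt_sum_normSq_eq_norm_toLp]
    exact hav
  have hdiff := norm_star_dotProduct_mulVec_sub_le A (kvec a b) (kvec v b)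
  rw [norm_toLp_kvec, norm_toLp_kvec, ha, hb, hv1, ← frobNorm_eq_frobenius_norm] at hdiff
  have hfrob : 0 ≤ frobNorm A := Real.sqrt_nonneg _
  calc (star (kvec a b) ⬝ᵥ A *ᵥ kvec a b).re
      = (star (kvec v b) ⬝ᵥ A *ᵥ kvec v b).re +
          (star (kvec a b) ⬝ᵥ A *ᵥ kvec a b - star (kvec v b) ⬝ᵥ A *ᵥ kvec v b).re := by
        rw [Complex.sub_re]; ring
    _ ≤ mtil + frobNorm A * (1 * 1 + 1 * 1) * δ :=
      add_le_add hnet ((Complex.re_le_norm _).trans (hdiff.trans (by gcongr)))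
    _ = mtil + 2 * δ * frobNorm A := by ring

theorem net_maximum_error_bound
    (M N : ℕ) (hM : 1 ≤ M) (hN : 1 ≤ N) (δ : ℝ) (hδ : 0 ≤ δ)
    (𝒩 : Finset (Fin M → ℂ)) (h𝒩ne : 𝒩.Nonempty)
    (h𝒩unit : ∀ v ∈ 𝒩, unitVec v)
    (h𝒩net : ∀ x : Fin M → ℂ, unitVec x →
      ∃ v ∈ 𝒩, Real.sqrt (∑ j, Complex.normSq (x j - v j)) ≤ δ)
    (A : Matrix (Fin M × Fin N) (Fin M × Fin N) ℂ) (hA : A.IsHermitian)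
    (mstar mtil : ℝ)
    (hmstar : IsGreatest {r : ℝ | ∃ a b, unitVec a ∧ unitVec b ∧
        r = ((star (kvec a b)) ⬝ᵥ A.mulVec (kvec a b)).re} mstar)
    (hmtil : IsGreatest {r : ℝ | ∃ v ∈ 𝒩, ∃ b, unitVec b ∧
        r = ((star (kvec v b)) ⬝ᵥ A.mulVec (kvec v b)).re} mtil) :
    mtil ≤ mstar ∧ mstar ≤ mtil + 2 * δ * frobNorm A :=
  net_maximum_error_bound_general M N δ 𝒩 h𝒩unit h𝒩net A mstar mtil hmstar hmtil
end

section
/- Let ρ be a density matrix on ℂ^M ⊗ ℂ^N with ρ ∉ S_{M,N}. Then there exists an entanglement witness detecting ρ: a Hermitian complex matrix A indexed by (Fin M) × (Fin N) such that for every σ ∈ S_{M,N}, Re tr(Aσ) < Re tr(Aρ). (For Hermitian A and Hermitian σ, tr(Aσ) is in fact real.) -/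
open scoped Matrix Kronecker BigOperators ComplexOrder

/-!
Pure product states are the continuous image of a product of two unit spheres, hence compact,
and by Carathéodory's theorem the convex hull of a compact set in finite dimension is compact.
So `SepSet M N` is closed and convex, and Hahn–Banach separates `ρ ∉ SepSet M N` from it by a
continuous `ℂ`-linear functional `f` with `Re f σ < Re f ρ`. Every linear functional on matrices
is `X ↦ tr (A X)`, and replacing `A` by its Hermitian part `(A + Aᴴ) / 2` leaves `Re tr (A X)`
unchanged for Hermitian `X`, in particular for `ρ` and for every separable `σ`.
-/

open Module

section ConvexHull

variable {𝕜 E : Type*} [Field 𝕜] [LinearOrder 𝕜] [IsStrictOrderedRing 𝕜]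
  [AddCommGroup E] [Module 𝕜 E] [FiniteDimensional 𝕜 E]

theorem exists_fin_finrank_succ_of_mem_convexHull {s : Set E} {x : E}
    (hx : x ∈ convexHull 𝕜 s) :
    ∃ w ∈ stdSimplex 𝕜 (Fin (finrank 𝕜 E + 1)), ∃ z : Fin (finrank 𝕜 E + 1) → E,
      (∀ i, z i ∈ s) ∧ ∑ i, w i • z i = x := by
  obtain ⟨x₀, hx₀⟩ := convexHull_nonempty_iff.1 ⟨x, hx⟩
  obtain ⟨ι, _, z, w, hzs, hai, hw0, hw1, hwz⟩ := eq_pos_convex_span_of_mem_convexHull hx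
  have hcard : Fintype.card ι ≤ finrank 𝕜 E + 1 :=
    hai.card_le_finrank_succ.trans (Nat.succ_le_succ (Submodule.finrank_le _))
  obtain ⟨e⟩ : Nonempty (ι ↪ Fin (finrank 𝕜 E + 1)) :=
    Function.Embedding.nonempty_of_card_le (by simpa using hcard)
  refine ⟨Function.extend e w 0, ⟨fun j => ?_, ?_⟩, Function.extend e z fun _ => x₀,
    fun j => ?_, ?_⟩
  · by_cases hj : j ∈ Set.range e
    · obtain ⟨i, rfl⟩ := hj
      simpa [e.injective.extend_apply] using (hw0 i).le
    · rw [Function.extend_apply' _ _ _ hj, Pi.zero_apply]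
  · rw [← hw1]
    exact (Fintype.sum_of_injective e e.injective w (Function.extend e w 0)
      (fun j hj => Function.extend_apply' _ _ _ hj)
      fun i => (e.injective.extend_apply _ _ _).symm).symm
  · by_cases hj : j ∈ Set.range e
    · obtain ⟨i, rfl⟩ := hj
      simpa [e.injective.extend_apply] using hzs (Set.mem_range_self i)
    · rwa [Function.extend_apply' _ _ _ hj]
  · rw [← hwz]
    refine (Fintype.sum_of_injective e e.injective _ _ (fun j hj => ?_) fun i => ?_).symm
    · rw [Function.extend_apply' _ _ _ hj, Pi.zero_apply, zero_smul]
    · simp [e.injective.extend_apply]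

variable [TopologicalSpace 𝕜] [OrderClosedTopology 𝕜] [CompactIccSpace 𝕜] [ContinuousAdd 𝕜]
  [TopologicalSpace E] [ContinuousAdd E] [ContinuousSMul 𝕜 E]

theorem IsCompact.convexHull {s : Set E} (hs : IsCompact s) :
    IsCompact (_root_.convexHull 𝕜 s) := by
  let n := finrank 𝕜 E + 1
  have himage : _root_.convexHull 𝕜 s =
      (fun p : (Fin n → 𝕜) × (Fin n → E) => ∑ i, p.1 i • p.2 i) ''
        (stdSimplex 𝕜 (Fin n) ×ˢ Set.univ.pi fun _ => s) := by
    refine Set.Subset.antisymm (fun x hx => ?_) ?_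
    · obtain ⟨w, hw, z, hzs, rfl⟩ := exists_fin_finrank_succ_of_mem_convexHull hx
      exact ⟨(w, z), ⟨hw, fun i _ => hzs i⟩, rfl⟩
    · rintro x ⟨⟨w, z⟩, ⟨⟨hw0, hw1⟩, hz⟩, rfl⟩
      exact (convex_convexHull 𝕜 s).sum_mem (fun i _ => hw0 i) hw1
        fun i _ => subset_convexHull 𝕜 s (hz i (Set.mem_univ i))
  rw [himage]
  exact ((isCompact_stdSimplex 𝕜 _).prod (isCompact_univ_pi fun _ => hs)).image (by fun_prop)

end ConvexHull

instance Matrix.instLocallyConvexSpace {m n 𝕜 α : Type*} [Semiring 𝕜] [PartialOrder 𝕜]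
    [AddCommMonoid α] [TopologicalSpace α] [Module 𝕜 α] [LocallyConvexSpace 𝕜 α] :
    LocallyConvexSpace 𝕜 (Matrix m n α) :=
  inferInstanceAs (LocallyConvexSpace 𝕜 (m → n → α))

theorem Matrix.exists_eq_trace_mul {n R : Type*} [Fintype n] [DecidableEq n] [CommSemiring R]
    (f : Matrix n n R →ₗ[R] R) : ∃ A : Matrix n n R, ∀ X, f X = (A * X).trace := by
  let A : Matrix n n R := Matrix.of fun i j => f (Matrix.single j i 1)
  have : f = Matrix.traceLinearMap n R R ∘ₗ LinearMap.mulLeft R A :=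
    Matrix.ext_linearMap R fun i j => LinearMap.ext_ring <| by simp [A, Matrix.trace_mul_single]
  exact ⟨A, fun X => congr($this X)⟩

theorem Matrix.re_trace_realPart_mul {n : Type*} [Fintype n] (A : Matrix n n ℂ)
    {X : Matrix n n ℂ} (hX : X.IsHermitian) :
    ((realPart A : Matrix n n ℂ) * X).trace.re = (A * X).trace.re := by
  have hstar : (star A * X).trace = star (A * X).trace := by
    rw [← Matrix.trace_conjTranspose, Matrix.conjTranspose_mul, hX.eq, Matrix.trace_mul_comm]
    rfl
  rw [realPart_apply_coe, Matrix.smul_mul, Matrix.trace_smul, Matrix.add_mul, Matrix.trace_add,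
    hstar, Complex.smul_re, Complex.add_re, Complex.star_def, Complex.conj_re]
  ring

theorem prodState_posSemidef {M N : ℕ} (a : Fin M → ℂ) (b : Fin N → ℂ) :
    (prodState a b).PosSemidef :=
  (Matrix.posSemidef_vecMulVec_self_star a).kronecker (Matrix.posSemidef_vecMulVec_self_star b)

theorem isHermitian_of_mem_sepSet {M N : ℕ} {σ : Matrix (Fin M × Fin N) (Fin M × Fin N) ℂ}
    (hσ : σ ∈ SepSet M N) : σ.IsHermitian := by
  have : SepSet M N ⊆ selfAdjoint.submodule ℝ (Matrix (Fin M × Fin N) (Fin M × Fin N) ℂ) := by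
    refine convexHull_min ?_ (Submodule.convex _)
    rintro _ ⟨a, b, -, -, rfl⟩
    exact (prodState_posSemidef a b).isHermitian.isSelfAdjoint
  exact IsSelfAdjoint.isHermitian (this hσ)

theorem isCompact_setOf_unitVec (M : ℕ) : IsCompact {a : Fin M → ℂ | unitVec a} := by
  refine (isCompact_univ_pi fun _ => isCompact_closedBall (0 : ℂ) 1).of_isClosed_subset
    (isClosed_eq (by fun_prop) continuous_const) fun a ha j _ => ?_
  have : Complex.normSq (a j) ≤ 1 :=
    ha ▸ Finset.single_le_sum (fun k _ => Complex.normSq_nonneg (a k)) (Finset.mem_univ j)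
  rw [Complex.normSq_eq_norm_sq] at this
  simpa using (sq_le_one_iff₀ (norm_nonneg _)).1 this

theorem continuous_prodState (M N : ℕ) :
    Continuous fun p : (Fin M → ℂ) × (Fin N → ℂ) => prodState p.1 p.2 :=
  continuous_pi fun i => continuous_pi fun j => by
    simp only [prodState, outer, Matrix.kroneckerMap_apply, Matrix.vecMulVec_apply]
    fun_prop

theorem isCompact_sepSet (M N : ℕ) : IsCompact (SepSet M N) := by
  refine IsCompact.convexHull ?_
  have : { X | ∃ a b, unitVec a ∧ unitVec b ∧ X = prodState a b } =
      (fun p : (Fin M → ℂ) × (Fin N → ℂ) => prodState p.1 p.2) ''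
        ({a | unitVec a} ×ˢ {b | unitVec b}) := by
    ext X
    simp [eq_comm]
  rw [this]
  exact ((isCompact_setOf_unitVec M).prod (isCompact_setOf_unitVec N)).image
    (continuous_prodState M N)

theorem exists_entanglement_witness_general
    (M N : ℕ)
    (ρ : Matrix (Fin M × Fin N) (Fin M × Fin N) ℂ)
    (hρ : ρ.PosSemidef ∧ ρ.trace = 1) (hent : ρ ∉ SepSet M N) :
    ∃ A : Matrix (Fin M × Fin N) (Fin M × Fin N) ℂ, A.IsHermitian ∧
      ∀ σ ∈ SepSet M N, (Matrix.trace (A * σ)).re < (Matrix.trace (A * ρ)).re := by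
  obtain ⟨f, u, hfσ, hfρ⟩ := RCLike.geometric_hahn_banach_closed_point (𝕜 := ℂ)
    (convex_convexHull ℝ _) (isCompact_sepSet M N).isClosed hent
  obtain ⟨A, hA⟩ := Matrix.exists_eq_trace_mul f.toLinearMap
  refine ⟨realPart A, (realPart A).prop.isHermitian, fun σ hσ => ?_⟩
  rw [Matrix.re_trace_realPart_mul A (isHermitian_of_mem_sepSet hσ),
    Matrix.re_trace_realPart_mul A hρ.1.isHermitian, ← hA, ← hA]
  exact (hfσ σ hσ).trans hfρ

theorem exists_entanglement_witness
    (M N : ℕ) (hM : 1 ≤ M) (hN : 1 ≤ N)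
    (ρ : Matrix (Fin M × Fin N) (Fin M × Fin N) ℂ)
    (hρ : ρ.PosSemidef ∧ ρ.trace = 1) (hent : ρ ∉ SepSet M N) :
    ∃ A : Matrix (Fin M × Fin N) (Fin M × Fin N) ℂ, A.IsHermitian ∧
      ∀ σ ∈ SepSet M N, (Matrix.trace (A * σ)).re < (Matrix.trace (A * ρ)).re :=
  exists_entanglement_witness_general M N ρ hρ hent
end
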